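/- For every oriented knot diagram, the quantity (2W + T)/2 is an odd integer, where W is the writhe (signed count of crossings) and T is the turning number (signed count of caps and cups with values ±1); equivalently, 2W + T ≡ 2 (mod 4). -/

import Mathlib

/-!
Give every intermediate state of the diagram, i.e. the list of open strand endpoints, the potential
`2 · (closed loops) + ∑_{x left of y} K x y` in `ZMod 4`, where `K x y` is the orientation sign of
`x` when `x` and `y` end the same arc and twice the indicator that their labels are inverted
otherwise. Over the four endpoints of two arcs the inversion terms add up to `2` exactly when the
arcs interleave, whatever their labels; this is why relabelling after a merge costs nothing.
Each generator changes the potential by its contribution to `2W + T` modulo 4: a cap inserts a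
pair worth its sign, a braiding swaps two adjacent endpoints and so changes one term by `2`, and a
cup, whether it closes a loop or merges two arcs, shifts the potential by its sign. The empty
diagram starts at `0` and a knot ends at `2`.
-/

/-- Generators of the free braided monoidal category `CC`: the four caps/cups
and the positive/negative braidings. -/
inductive Gen : Type
  | capR | capL | cupR | cupL | pos | neg
deriving DecidableEq

/-- A diagram is a list of elementary slices; each slice is a generator applied
at a given horizontal position.  It is executed on a state consisting of the
list of currently open strand endpoints (orientation `true` = upward, together
with a connected-component label), the number of closed loops completed so far,
and a fresh-label counter. -/
def stepFn (g : Gen × ℕ) (st : List (Bool × ℕ) × ℕ × ℕ) :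
    Option (List (Bool × ℕ) × ℕ × ℕ) :=
  match g, st with
  | (Gen.capR, k), (s, l, n) =>
      if k ≤ s.length then
        some (s.take k ++ [(true, n), (false, n)] ++ s.drop k, l, n + 1)
      else none
  | (Gen.capL, k), (s, l, n) =>
      if k ≤ s.length then
        some (s.take k ++ [(false, n), (true, n)] ++ s.drop k, l, n + 1)
      else none
  | (Gen.cupR, k), (s, l, n) =>
      match s[k]?, s[k + 1]? with
      | some (false, i), some (true, j) =>
          let s' := s.take k ++ s.drop (k + 2)
          if i = j then some (s', l + 1, n)
          else some (s'.map fun p => if p.2 = j then (p.1, i) else p, l, n)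
      | _, _ => none
  | (Gen.cupL, k), (s, l, n) =>
      match s[k]?, s[k + 1]? with
      | some (true, i), some (false, j) =>
          let s' := s.take k ++ s.drop (k + 2)
          if i = j then some (s', l + 1, n)
          else some (s'.map fun p => if p.2 = j then (p.1, i) else p, l, n)
      | _, _ => none
  | (Gen.pos, k), (s, l, n) =>
      match s[k]?, s[k + 1]? with
      | some a, some b => some (s.take k ++ [b, a] ++ s.drop (k + 2), l, n)
      | _, _ => none
  | (Gen.neg, k), (s, l, n) =>
      match s[k]?, s[k + 1]? with
      | some a, some b => some (s.take k ++ [b, a] ++ s.drop (k + 2), l, n)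
      | _, _ => none

/-- Run a diagram from the empty state. -/
def run (d : List (Gen × ℕ)) : Option (List (Bool × ℕ) × ℕ × ℕ) :=
  d.foldlM (fun st g => stepFn g st) ([], 0, 0)

/-- The writhe: the signed count of crossings. -/
def W (d : List (Gen × ℕ)) : ℤ :=
  (d.map fun g => match g.1 with | Gen.pos => (1 : ℤ) | Gen.neg => -1 | _ => 0).sum

/-- The turning number: the signed count of caps and cups. -/
def T (d : List (Gen × ℕ)) : ℤ :=
  (d.map fun g => match g.1 with
    | Gen.capR => (1 : ℤ) | Gen.cupL => 1 | Gen.capL => -1 | Gen.cupR => -1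
    | _ => 0).sum

/-- A diagram is an (oriented) knot diagram when it runs to completion with no
open strands and exactly one closed loop (a single connected component). -/
def IsKnotDiagram (d : List (Gen × ℕ)) : Prop :=
  ∃ n, run d = some ([], 1, n)


namespace List

variable {α β M : Type*} [AddCommMonoid M]

lemma exists_eq_append_cons_cons_of_getElem? {s : List α} {k : ℕ} {x y : α}
    (hx : s[k]? = some x) (hy : s[k + 1]? = some y) :
    ∃ u v, s = u ++ x :: y :: v ∧ s.take k = u ∧ s.drop (k + 2) = v := by
  obtain ⟨hk, rfl⟩ := getElem?_eq_some_iff.mp hx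
  obtain ⟨hk', rfl⟩ := getElem?_eq_some_iff.mp hy
  refine ⟨_, _, ?_, rfl, rfl⟩
  rw [← drop_eq_getElem_cons hk', ← drop_eq_getElem_cons hk, take_append_drop]

lemma perm_middle_cons_cons (u v : List α) (x y : α) :
    (u ++ x :: y :: v).Perm (x :: y :: (u ++ v)) :=
  perm_middle.trans (perm_middle.cons x)

lemma sum_map_middle (g : α → M) (u v : List α) (a : α) :
    ((u ++ a :: v).map g).sum = g a + ((u ++ v).map g).sum := by
  rw [(perm_middle.map g).sum_eq, map_cons, sum_cons]

lemma foldlM_option_invariant {step : α → β → Option α} {P : α → Prop} {φ : α → M} {w : β → M}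
    (hstep : ∀ a b a', P a → step a b = some a' → P a' ∧ φ a' = φ a + w b) :
    ∀ (d : List β) {a a' : α}, P a → d.foldlM step a = some a' →
      P a' ∧ φ a' = φ a + (d.map w).sum
  | [], a, a', ha, h => by
    obtain rfl : a = a' := Option.some.inj h
    simp [ha]
  | b :: d, a, a', ha, h => by
    rw [foldlM_cons] at h
    obtain ⟨a₁, h₁, h⟩ := Option.bind_eq_some_iff.mp h
    obtain ⟨ha₁, hφ₁⟩ := hstep a b a₁ ha h₁
    obtain ⟨ha', hφ⟩ := foldlM_option_invariant hstep d ha₁ h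
    rw [hφ, hφ₁, map_cons, sum_cons, add_assoc]
    exact ⟨ha', rfl⟩

end List

section PairSum

variable {α M : Type*} [AddCommMonoid M] (f : α → α → M)

def pairSum : List α → M
  | [] => 0
  | x :: xs => (xs.map (f x)).sum + pairSum xs

@[simp] lemma pairSum_nil : pairSum f [] = 0 := rfl

@[simp] lemma pairSum_cons (x : α) (xs : List α) :
    pairSum f (x :: xs) = (xs.map (f x)).sum + pairSum f xs := rfl

lemma pairSum_middle (u v : List α) (a : α) :
    pairSum f (u ++ a :: v) =
      pairSum f (u ++ v) + (u.map (f · a)).sum + (v.map (f a)).sum := by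
  induction u with
  | nil => simp [add_comm]
  | cons x u ih =>
    simp only [List.cons_append, pairSum_cons, ih, List.map_append, List.map_cons,
      List.sum_append, List.sum_cons]
    abel

lemma pairSum_swap (u v : List α) (a c : α) :
    pairSum f (u ++ a :: c :: v) + f c a = pairSum f (u ++ c :: a :: v) + f a c := by
  induction u with
  | nil => simp only [List.nil_append, pairSum_cons, List.map_cons, List.sum_cons]; abel
  | cons x u ih =>
    simp only [List.cons_append, pairSum_cons, List.map_append, List.map_cons,
      List.sum_append, List.sum_cons]
    rw [add_assoc, ih, ← add_assoc]
    abel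

end PairSum

def orient (b : Bool) : ZMod 4 := if b then 1 else -1

lemma orient_not (b : Bool) : orient (!b) = orient b + 2 := by
  cases b <;> decide

lemma two_mul_orient (b : Bool) : 2 * orient b = 2 := by
  cases b <;> decide

def pairTerm (x y : Bool × ℕ) : ZMod 4 :=
  if x.2 = y.2 then orient x.1 else if y.2 < x.2 then 2 else 0

@[simp] lemma pairTerm_same_label (b b' : Bool) (i : ℕ) : pairTerm (b, i) (b', i) = orient b := by
  simp [pairTerm]

lemma pairTerm_swap {x y : Bool × ℕ} (h : x ≠ y) : pairTerm y x = pairTerm x y + 2 := by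
  obtain ⟨b, i⟩ := x
  obtain ⟨b', j⟩ := y
  by_cases hij : i = j
  · subst hij
    obtain rfl : b' = !b := by cases b <;> cases b' <;> simp_all
    simp [orient_not]
  · unfold pairTerm
    split_ifs <;> first | omega | decide

lemma pairTerm_add_pairTerm {x y x' y' : Bool × ℕ} (h : x.2 ≠ y.2) (hx : x'.2 = x.2)
    (hy : y'.2 = y.2) : pairTerm x y + pairTerm x' y' = 0 := by
  unfold pairTerm
  rw [hx, hy]
  split_ifs <;> first | omega | decide

lemma sum_pairTerm_add_sum_pairTerm_eq_zero (l : List (Bool × ℕ)) (b b' : Bool) {i : ℕ}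
    (hl : ∀ z ∈ l, z.2 ≠ i) :
    (l.map (pairTerm · (b, i))).sum + (l.map (pairTerm · (b', i))).sum = 0 := by
  rw [← List.sum_map_add]
  exact List.sum_eq_zero fun x hx => by
    obtain ⟨z, hz, rfl⟩ := List.mem_map.mp hx
    exact pairTerm_add_pairTerm (hl z hz) rfl rfl

/-- Every term in which `a` stands left of some `z ∈ v` is traded for the term with `z` left of
`a`, so the insertion cost depends on the position of `a` only through `v.length`. -/
lemma pairSum_pairTerm_middle (u v : List (Bool × ℕ)) {a : Bool × ℕ} (ha : a ∉ v) :
    pairSum pairTerm (u ++ a :: v) =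
      pairSum pairTerm (u ++ v) + ((u ++ v).map (pairTerm · a)).sum + 2 * v.length := by
  have hv : (v.map (pairTerm a)).sum = (v.map (pairTerm · a)).sum + 2 * v.length := by
    rw [List.map_congr_left fun z hz => pairTerm_swap (ne_of_mem_of_not_mem hz ha),
      List.sum_map_add]
    simp [mul_comm]
  rw [pairSum_middle, hv, List.map_append, List.sum_append]
  abel

lemma pairSum_pairTerm_middle_pair (u v : List (Bool × ℕ)) (b : Bool) {i : ℕ}
    (hi : ∀ z ∈ u ++ v, z.2 ≠ i) :
    pairSum pairTerm (u ++ (b, i) :: (!b, i) :: v) = pairSum pairTerm (u ++ v) + orient b := by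
  have hv : ∀ z ∈ v, z.2 ≠ i := fun z hz => hi z (List.mem_append_right u hz)
  rw [pairSum_pairTerm_middle u _ (by simpa using fun h => hv _ h rfl),
    pairSum_pairTerm_middle u v (fun h => hv _ h rfl)]
  have h0 := sum_pairTerm_add_sum_pairTerm_eq_zero _ b (!b) hi
  simp only [List.map_append, List.map_cons, List.sum_append, List.sum_cons, List.length_cons,
    Nat.cast_add, Nat.cast_one, pairTerm_same_label, orient_not] at h0 ⊢
  linear_combination (norm := (ring_nf; reduce_mod_char)) h0

lemma pairSum_pairTerm_merge (b : Bool) {i j : ℕ} (hij : i ≠ j) {u v w₁ w₂ : List (Bool × ℕ)}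
    (hw : u ++ v = w₁ ++ (b, j) :: w₂) (hj : ∀ z ∈ w₁ ++ w₂, z.2 ≠ j) (hbi : (b, i) ∉ u ++ v) :
    pairSum pairTerm (w₁ ++ (b, i) :: w₂) =
      pairSum pairTerm (u ++ (b, i) :: (!b, j) :: v) + orient b := by
  have hv : (!b, j) ∉ v := fun h => by
    rcases List.mem_cons.mp (List.perm_middle.mem_iff.mp (hw ▸ List.mem_append_right u h))
      with h' | h'
    · simp at h'
    · exact hj _ h' rfl
  have hbi' : (b, i) ∉ (!b, j) :: v := by
    simpa [hij] using fun h => hbi (List.mem_append_right u h)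
  rw [pairSum_pairTerm_middle u _ hbi', pairSum_pairTerm_middle u v hv, List.sum_map_middle, hw,
    pairSum_pairTerm_middle w₁ w₂ (a := (b, j)) fun h => hj _ (List.mem_append_right w₁ h) rfl,
    pairSum_pairTerm_middle w₁ w₂ (a := (b, i)) fun h => hbi (hw ▸ by simp [h]),
    List.sum_map_middle, List.sum_map_middle]
  -- Deleting `(!b, j)` and turning `(b, j)` into `(b, i)` change the sums over `w₁ ++ w₂` by
  -- opposite amounts, as `pairTerm z (b, j) = -pairTerm z (!b, j)` when `z.2 ≠ j`.
  have h0 := sum_pairTerm_add_sum_pairTerm_eq_zero _ b (!b) hj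
  have h1 := pairTerm_add_pairTerm (x := (b, j)) (y := (b, i)) (x' := (!b, j)) (y' := (b, i))
    (Ne.symm hij) rfl rfl
  simp only [List.length_cons, Nat.cast_add, Nat.cast_one, pairTerm_same_label] at h0 ⊢
  linear_combination (norm := (ring_nf; reduce_mod_char)) -h0 - h1 - two_mul_orient b

def potential (st : List (Bool × ℕ) × ℕ × ℕ) : ZMod 4 := 2 * st.2.1 + pairSum pairTerm st.1

def weight : Gen → ZMod 4
  | .capR => orient true | .capL => orient false | .cupR => orient false | .cupL => orient true
  | .pos => 2 | .neg => -2

structure WellFormedState (s : List (Bool × ℕ)) (n : ℕ) : Prop where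
  nodup : s.Nodup
  label_lt : ∀ z ∈ s, z.2 < n
  partner_mem : ∀ b j, (b, j) ∈ s → (!b, j) ∈ s

namespace WellFormedState

variable {s t u v r : List (Bool × ℕ)} {k l n : ℕ} {st' : List (Bool × ℕ) × ℕ × ℕ}

lemma nil : WellFormedState [] 0 := ⟨List.nodup_nil, by simp, by simp⟩

lemma perm (hs : WellFormedState s n) (h : s.Perm t) : WellFormedState t n :=
  ⟨h.nodup_iff.mp hs.nodup, fun z hz => hs.label_lt z (h.mem_iff.mpr hz),
    fun b j hz => h.mem_iff.mp (hs.partner_mem b j (h.mem_iff.mpr hz))⟩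

lemma perm_iff (h : s.Perm t) : WellFormedState s n ↔ WellFormedState t n :=
  ⟨fun hs => hs.perm h, fun ht => ht.perm h.symm⟩

lemma cons_cons (hs : WellFormedState s n) (b : Bool) :
    WellFormedState ((b, n) :: (!b, n) :: s) (n + 1) := by
  have hn : ∀ c, (c, n) ∉ s := fun c h => (hs.label_lt _ h).ne rfl
  refine ⟨by simp [hs.nodup, hn], ?_, ?_⟩
  · simp only [List.mem_cons]
    rintro z (rfl | rfl | hz)
    exacts [n.lt_succ_self, n.lt_succ_self, (hs.label_lt z hz).trans n.lt_succ_self]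
  · simp only [List.mem_cons]
    rintro c j (h | h | h)
    · simp_all
    · simp_all
    · exact Or.inr (Or.inr (hs.partner_mem c j h))

lemma of_cons_cons {b : Bool} {i : ℕ} (hs : WellFormedState ((b, i) :: (!b, i) :: r) n) :
    WellFormedState r n ∧ ∀ z ∈ r, z.2 ≠ i := by
  have hnd := hs.nodup
  simp only [List.nodup_cons, List.mem_cons, not_or] at hnd
  have hi : ∀ z ∈ r, z.2 ≠ i := by
    rintro ⟨c, k⟩ hz rfl
    cases b <;> cases c <;> simp_all
  refine ⟨⟨hnd.2.2, fun z hz => hs.label_lt z (by simp [hz]), fun c k hz => ?_⟩, hi⟩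
  have := hs.partner_mem c k (by simp [hz])
  simp only [List.mem_cons] at this
  rcases this with h | h | h <;>
    first | exact h | exact absurd (congrArg Prod.snd h) (hi (c, k) hz)

lemma exists_merge {b : Bool} {i j : ℕ} (hs : WellFormedState ((b, i) :: (!b, j) :: r) n)
    (hij : i ≠ j) :
    ∃ w₁ w₂, r = w₁ ++ (b, j) :: w₂ ∧ (∀ z ∈ w₁ ++ w₂, z.2 ≠ j) ∧ (b, i) ∉ r ∧
      WellFormedState (w₁ ++ (b, i) :: w₂) n := by
  have hnd := hs.nodup
  simp only [List.nodup_cons, List.mem_cons, not_or] at hnd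
  obtain ⟨⟨-, hbi⟩, hbj', hr⟩ := hnd
  have hbj : (b, j) ∈ r := by
    simpa [hij.symm] using hs.partner_mem (!b) j (by simp)
  obtain ⟨w₁, w₂, rfl⟩ := List.append_of_mem hbj
  obtain ⟨hbj₂, hw⟩ := List.nodup_cons.mp (List.nodup_middle.mp hr)
  have hj : ∀ z ∈ w₁ ++ w₂, z.2 ≠ j := by
    rintro ⟨c, k⟩ hz rfl
    cases b <;> cases c <;> simp_all
  refine ⟨w₁, w₂, rfl, hj, hbi, (perm_iff List.perm_middle).mpr ⟨?_, ?_, ?_⟩⟩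
  · exact List.nodup_cons.mpr ⟨fun h => hbi (List.perm_middle.mem_iff.mpr (.tail _ h)), hw⟩
  · intro z hz
    exact hs.label_lt z (by simp only [List.mem_cons, List.mem_append] at hz ⊢; tauto)
  · rintro c k hz
    have := hs.partner_mem c k (by simp only [List.mem_cons, List.mem_append] at hz ⊢; tauto)
    have hk := hj (c, k)
    simp only [List.mem_cons, List.mem_append] at hz this hk ⊢
    grind

lemma cap (hs : WellFormedState (u ++ v) n) (b : Bool) :
    WellFormedState (u ++ (b, n) :: (!b, n) :: v) (n + 1) ∧
      pairSum pairTerm (u ++ (b, n) :: (!b, n) :: v) = pairSum pairTerm (u ++ v) + orient b :=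
  ⟨(perm_iff (List.perm_middle_cons_cons _ _ _ _)).mpr (hs.cons_cons b),
    pairSum_pairTerm_middle_pair _ _ b fun z hz => (hs.label_lt z hz).ne⟩

lemma braid {a c : Bool × ℕ} (hs : WellFormedState (u ++ a :: c :: v) n) :
    WellFormedState (u ++ c :: a :: v) n ∧
      pairSum pairTerm (u ++ c :: a :: v) = pairSum pairTerm (u ++ a :: c :: v) + 2 := by
  have hac : a ≠ c := by
    have := (List.perm_middle_cons_cons _ _ _ _).nodup_iff.mp hs.nodup
    simp_all
  refine ⟨hs.perm ((List.Perm.swap c a v).append_left u), ?_⟩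
  have := pairSum_swap pairTerm u v a c
  rw [pairTerm_swap hac] at this
  linear_combination -this

lemma close {b : Bool} {i : ℕ} (hs : WellFormedState (u ++ (b, i) :: (!b, i) :: v) n) :
    WellFormedState (u ++ v) n ∧
      pairSum pairTerm (u ++ (b, i) :: (!b, i) :: v) = pairSum pairTerm (u ++ v) + orient b := by
  obtain ⟨hs', hi⟩ := ((perm_iff (List.perm_middle_cons_cons _ _ _ _)).mp hs).of_cons_cons
  exact ⟨hs', pairSum_pairTerm_middle_pair _ _ b hi⟩

lemma merge {b : Bool} {i j : ℕ} (hs : WellFormedState (u ++ (b, i) :: (!b, j) :: v) n)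
    (hij : i ≠ j) :
    WellFormedState ((u ++ v).map fun p => if p.2 = j then (p.1, i) else p) n ∧
      pairSum pairTerm ((u ++ v).map fun p => if p.2 = j then (p.1, i) else p) =
        pairSum pairTerm (u ++ (b, i) :: (!b, j) :: v) + orient b := by
  obtain ⟨w₁, w₂, hw, hj, hbi, hs'⟩ :=
    ((perm_iff (List.perm_middle_cons_cons _ _ _ _)).mp hs).exists_merge hij
  have hid : ∀ w : List (Bool × ℕ), (∀ z ∈ w, z.2 ≠ j) →
      (w.map fun p => if p.2 = j then (p.1, i) else p) = w :=
    fun w hw => (List.map_congr_left fun z hz => if_neg (hw z hz)).trans (List.map_id w)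
  have hmap : ((u ++ v).map fun p => if p.2 = j then (p.1, i) else p) = w₁ ++ (b, i) :: w₂ := by
    rw [hw, List.map_append, List.map_cons, if_pos rfl,
      hid w₁ fun z hz => hj z (List.mem_append_left w₂ hz),
      hid w₂ fun z hz => hj z (List.mem_append_right w₁ hz)]
  rw [hmap]
  exact ⟨hs', pairSum_pairTerm_merge b hij hw hj hbi⟩


lemma step_cap (hs : WellFormedState s n) (b : Bool) :
    WellFormedState (s.take k ++ [(b, n), (!b, n)] ++ s.drop k) (n + 1) ∧
      potential (s.take k ++ [(b, n), (!b, n)] ++ s.drop k, l, n + 1) =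
        potential (s, l, n) + orient b := by
  rw [← List.take_append_drop k s] at hs
  obtain ⟨hs', hps⟩ := hs.cap b
  simp only [List.append_assoc, List.cons_append, List.nil_append, potential]
  refine ⟨hs', ?_⟩
  rw [hps, List.take_append_drop]
  ring

lemma step_braid (hs : WellFormedState s n) {a c : Bool × ℕ}
    (ha : s[k]? = some a) (hc : s[k + 1]? = some c) :
    WellFormedState (s.take k ++ [c, a] ++ s.drop (k + 2)) n ∧
      potential (s.take k ++ [c, a] ++ s.drop (k + 2), l, n) = potential (s, l, n) + 2 := by
  obtain ⟨u, v, rfl, hu, hv⟩ := List.exists_eq_append_cons_cons_of_getElem? ha hc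
  obtain ⟨hs', hps⟩ := hs.braid
  simp only [hu, hv, List.append_assoc, List.cons_append, List.nil_append, potential]
  refine ⟨hs', ?_⟩
  rw [hps]
  ring

lemma step_cup (hs : WellFormedState s n) {b : Bool} {i j : ℕ}
    (hi : s[k]? = some (b, i)) (hj : s[k + 1]? = some (!b, j))
    (h : (if i = j then some (s.take k ++ s.drop (k + 2), l + 1, n) else
      some ((s.take k ++ s.drop (k + 2)).map fun p => if p.2 = j then (p.1, i) else p, l, n))
        = some st') :
    WellFormedState st'.1 st'.2.2 ∧ potential st' = potential (s, l, n) + orient b := by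
  obtain ⟨u, v, rfl, hu, hv⟩ := List.exists_eq_append_cons_cons_of_getElem? hi hj
  rw [hu, hv] at h
  split_ifs at h with hij
  · subst hij
    obtain rfl := Option.some.inj h
    obtain ⟨hs', hps⟩ := hs.close
    refine ⟨hs', ?_⟩
    simp only [potential, hps]
    push_cast
    linear_combination -two_mul_orient b
  · obtain rfl := Option.some.inj h
    obtain ⟨hs', hps⟩ := hs.merge hij
    exact ⟨hs', by simp only [potential, hps]; ring⟩

lemma step {g : Gen} (hs : WellFormedState s n) (h : stepFn (g, k) (s, l, n) = some st') :
    WellFormedState st'.1 st'.2.2 ∧ potential st' = potential (s, l, n) + weight g := by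
  cases g <;> simp only [stepFn] at h <;> split at h <;> try obtain rfl := Option.some.inj h
  -- `-2 = 2` in `ZMod 4`, so `step_braid` serves both braidings.
  all_goals first
    | exact hs.step_cap _
    | exact hs.step_cup ‹_› ‹_› h
    | exact hs.step_braid ‹_› ‹_›
    | simp at h

end WellFormedState

lemma intCast_two_mul_W_add_T (d : List (Gen × ℕ)) :
    ((2 * W d + T d : ℤ) : ZMod 4) = (d.map fun g => weight g.1).sum := by
  induction d with
  | nil => simp [W, T]
  | cons g d ih =>
    unfold W T at ih ⊢
    simp only [List.map_cons, List.sum_cons, Int.cast_add, Int.cast_mul] at ih ⊢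
    rw [← ih]
    rcases g with ⟨_ | _ | _ | _ | _ | _, k⟩ <;> simp only [weight, orient] <;> push_cast <;> ring

/-- For every oriented knot diagram, `2W + T ≡ 2 (mod 4)`;
equivalently `(2W + T)/2` is an odd integer. -/
theorem knot_writhe_turning_mod_four (d : List (Gen × ℕ)) (h : IsKnotDiagram d) :
    2 * W d + T d ≡ 2 [ZMOD 4] := by
  obtain ⟨m, hrun⟩ := h
  have key := List.foldlM_option_invariant (step := fun st g => stepFn g st)
    (P := fun st => WellFormedState st.1 st.2.2) (φ := potential) (w := fun g => weight g.1)
    (fun _ _ _ hs h => hs.step h) d WellFormedState.nil hrun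
  have hsum : (d.map fun g => weight g.1).sum = 2 := by simpa [potential] using key.2.symm
  refine (ZMod.intCast_eq_intCast_iff _ _ 4).mp ?_
  rw [intCast_two_mul_W_add_T, hsum]
  rfl
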